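/- Let f : X → Y be a base-resolvable function from a topological space X to a regular (T3) space Y, and let D be a countable dense subset of X such that the restriction f|D has no point of continuity. Then for every finite subset F ⊆ Y there exists a subset Q ⊆ D \ f⁻¹(F) that is dense in X and such that the restriction f|Q has no point of continuity. -/

import Mathlib

open Set Filter Topology

/-- A subset `A` of a topological space `X` is *resolvable* if for every closed set `F ⊆ X`
the set `closure (F ∩ A) ∩ closure (F \ A)` is nowhere dense in the subspace `F`. -/
def IsResolvableSet {X : Type*} [TopologicalSpace X] (A : Set X) : Prop :=
  ∀ F : Set X, IsClosed F →
    IsNowhereDense (Subtype.val ⁻¹' (closure (F ∩ A) ∩ closure (F \ A)) : Set F)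

/-- A function `f : X → Y` is *weakly discontinuous* if every subspace `A ⊆ X` contains a
subset `U ⊆ A` which is open and dense in `A` and such that `f` restricted to `U` is
continuous. -/
def WeaklyDiscontinuous {X Y : Type*} [TopologicalSpace X] [TopologicalSpace Y]
    (f : X → Y) : Prop :=
  ∀ A : Set X, ∃ U : Set X, U ⊆ A ∧ (∃ V : Set X, IsOpen V ∧ U = V ∩ A) ∧
    A ⊆ closure U ∧ ContinuousOn f U

/-- A function is *resolvable* if preimages of resolvable sets are resolvable. -/
def ResolvableFunction {X Y : Type*} [TopologicalSpace X] [TopologicalSpace Y]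
    (f : X → Y) : Prop :=
  ∀ R : Set Y, IsResolvableSet R → IsResolvableSet (f ⁻¹' R)

/-- A function is *open-resolvable* if preimages of open sets are resolvable. -/
def OpenResolvableFunction {X Y : Type*} [TopologicalSpace X] [TopologicalSpace Y]
    (f : X → Y) : Prop :=
  ∀ U : Set Y, IsOpen U → IsResolvableSet (f ⁻¹' U)

/-- A base of the topology is *countably additive* if it is closed under countable unions. -/
def CountablyAdditiveBase {Y : Type*} [TopologicalSpace Y] (B : Set (Set Y)) : Prop :=
  TopologicalSpace.IsTopologicalBasis B ∧ ∀ C ⊆ B, C.Countable → ⋃₀ C ∈ B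

/-- A function is *base-resolvable* if there is a countably additive base of the topology of the
codomain whose members have resolvable preimages. -/
def BaseResolvableFunction {X Y : Type*} [TopologicalSpace X] [TopologicalSpace Y]
    (f : X → Y) : Prop :=
  ∃ B : Set (Set Y), CountablyAdditiveBase B ∧ ∀ U ∈ B, IsResolvableSet (f ⁻¹' U)

/-- A space `X` is *Preiss-Simon at `x`* if for every `A ⊆ X` with `x ∈ closure A` there is
a sequence `(U n)` of nonempty, relatively open subsets of `A` converging to `x`, i.e. every
neighborhood of `x` contains all but finitely many of the sets `U n`. -/
def PreissSimonAt {X : Type*} [TopologicalSpace X] (x : X) : Prop :=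
  ∀ A : Set X, x ∈ closure A →
    ∃ U : ℕ → Set X, (∀ n, U n ⊆ A) ∧ (∀ n, (U n).Nonempty) ∧
      (∀ n, IsOpen (Subtype.val ⁻¹' (U n) : Set A)) ∧
      ∀ V ∈ 𝓝 x, ∀ᶠ n in atTop, U n ⊆ V

/-- A *Preiss-Simon space* is a space which is Preiss-Simon at each of its points. -/
def PreissSimonSpace (X : Type*) [TopologicalSpace X] : Prop :=
  ∀ x : X, PreissSimonAt x

/-- A function is *scatteredly continuous* if its restriction to any nonempty subset has a
point of continuity. -/
def ScatteredlyContinuous {X Y : Type*} [TopologicalSpace X] [TopologicalSpace Y]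
    (f : X → Y) : Prop :=
  ∀ A : Set X, A.Nonempty → ∃ a ∈ A, ContinuousWithinAt f A a

/-- `f` is *almost continuous at `x`* if for every neighborhood `Oy` of `f x` the preimage
`f ⁻¹' Oy` is dense in some neighborhood of `x`. -/
def AlmostContinuousAt {X Y : Type*} [TopologicalSpace X] [TopologicalSpace Y]
    (f : X → Y) (x : X) : Prop :=
  ∀ Oy ∈ 𝓝 (f x), ∃ N : Set X, IsOpen N ∧ x ∈ N ∧ N ⊆ closure (f ⁻¹' Oy)

/-- `f` is *weakly continuous at `x`* if for every neighborhood `Oy` of `f x` the interior of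
the preimage `f ⁻¹' Oy` is dense in some neighborhood of `x`. -/
def WeaklyContinuousAt {X Y : Type*} [TopologicalSpace X] [TopologicalSpace Y]
    (f : X → Y) (x : X) : Prop :=
  ∀ Oy ∈ 𝓝 (f x), ∃ N : Set X, IsOpen N ∧ x ∈ N ∧ N ⊆ closure (interior (f ⁻¹' Oy))

/-- `X` has a countable π-base: a countable family of nonempty open sets such that every
nonempty open set contains a member of the family. -/
def HasCountablePiBase (X : Type*) [TopologicalSpace X] : Prop :=
  ∃ P : Set (Set X), P.Countable ∧ (∀ U ∈ P, IsOpen U ∧ U.Nonempty) ∧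
    ∀ U : Set X, IsOpen U → U.Nonempty → ∃ V ∈ P, V ⊆ U

/-!
Values are removed one at a time. Off `f⁻¹(y)` the dense set `D` stays dense, since otherwise `f`
would be constant, hence continuous, on a nonempty relatively open piece of `D`. Countable
additivity puts the countably many values `f(D \ f⁻¹(y))` inside one basic set `V ∌ y`, and
`A = f⁻¹(V)` is resolvable and dense, so its frontier is nowhere dense and `interior A` is dense.
Then `Q = D ∩ interior A` avoids `f⁻¹(y)`, is dense, and, being relatively open in `D`, inherits
from `D` the absence of points of continuity.
-/

section

variable {X Y : Type*} [TopologicalSpace X] [TopologicalSpace Y]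

def NowhereContinuousOn (f : X → Y) (D : Set X) : Prop :=
  ∀ x ∈ D, ¬ ContinuousWithinAt f D x

theorem NowhereContinuousOn.inter_isOpen {f : X → Y} {D U : Set X}
    (hf : NowhereContinuousOn f D) (hU : IsOpen U) : NowhereContinuousOn f (D ∩ U) :=
  fun x hx hcont =>
    hf x hx.1 (hcont.mono_of_mem_nhdsWithin (inter_mem_nhdsWithin D (hU.mem_nhds hx.2)))

theorem NowhereContinuousOn.dense_diff_preimage_singleton {f : X → Y} {D : Set X}
    (hf : NowhereContinuousOn f D) (hD : Dense D) (y : Y) : Dense (D \ f ⁻¹' {y}) := by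
  rw [dense_iff_inter_open]
  intro U hU hUne
  by_contra hempty
  have hconst : EqOn f (fun _ => y) (D ∩ U) := fun x hx =>
    by_contra fun hne => hempty ⟨x, hx.2, hx.1, hne⟩
  obtain ⟨x, hxU, hxD⟩ := hD.inter_open_nonempty U hU hUne
  exact hf.inter_isOpen hU x ⟨hxD, hxU⟩ (continuousOn_const.congr hconst x ⟨hxD, hxU⟩)

theorem IsResolvableSet.isNowhereDense_frontier {A : Set X} (hA : IsResolvableSet A) :
    IsNowhereDense (frontier A) := by
  have h := (hA univ isClosed_univ).image_val
  rwa [Subtype.image_preimage_coe, univ_inter, univ_inter, ← compl_eq_univ_sdiff,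
    ← frontier_eq_closure_inter_closure] at h

theorem Dense.dense_interior_of_isNowhereDense_frontier {A : Set X} (hA : Dense A)
    (hfr : IsNowhereDense (frontier A)) : Dense (interior A) := by
  rw [frontier, hA.closure_eq, ← compl_eq_univ_sdiff] at hfr
  simpa using (isClosed_isNowhereDense_iff_compl.1 ⟨isOpen_interior.isClosed_compl, hfr⟩).2

theorem CountablyAdditiveBase.exists_mem_subset_of_countable {B : Set (Set Y)}
    (hB : CountablyAdditiveBase B) {S U : Set Y} (hS : S.Countable) (hU : IsOpen U)
    (hSU : S ⊆ U) : ∃ V ∈ B, S ⊆ V ∧ V ⊆ U := by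
  have hbasic : ∀ s : S, ∃ V ∈ B, (s : Y) ∈ V ∧ V ⊆ U := fun s =>
    hB.1.exists_subset_of_mem_open (hSU s.2) hU
  choose V hVB hsV hVU using hbasic
  have : Countable S := hS.to_subtype
  refine ⟨⋃₀ range V, hB.2 _ (range_subset_iff.2 hVB) (countable_range V), ?_, ?_⟩
  · exact fun s hs => mem_sUnion_of_mem (hsV ⟨s, hs⟩) (mem_range_self _)
  · exact sUnion_subset (forall_mem_range.2 hVU)

theorem BaseResolvableFunction.exists_dense_nowhereContinuousOn_subset_inter_preimage
    {f : X → Y} (hf : BaseResolvableFunction f) {D : Set X} (hDc : D.Countable)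
    (hnc : NowhereContinuousOn f D) {U : Set Y} (hU : IsOpen U) (hDU : Dense (D ∩ f ⁻¹' U)) :
    ∃ Q ⊆ D ∩ f ⁻¹' U, Dense Q ∧ NowhereContinuousOn f Q := by
  obtain ⟨B, hB, hres⟩ := hf
  obtain ⟨V, hVB, hDV, hVU⟩ := hB.exists_mem_subset_of_countable
    ((hDc.mono inter_subset_left).image f) hU (image_subset_iff.2 fun x hx => hx.2)
  have hA : Dense (interior (f ⁻¹' V)) :=
    (hDU.mono (image_subset_iff.1 hDV)).dense_interior_of_isNowhereDense_frontier
      (hres V hVB).isNowhereDense_frontier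
  refine ⟨D ∩ interior (f ⁻¹' V), ?_, ?_, hnc.inter_isOpen isOpen_interior⟩
  · exact inter_subset_inter_right D (interior_subset.trans (preimage_mono hVU))
  · exact (hDU.mono inter_subset_left).inter_of_isOpen_right hA isOpen_interior

theorem BaseResolvableFunction.exists_dense_nowhereContinuousOn_subset_diff_preimage_singleton
    [T1Space Y] {f : X → Y} (hf : BaseResolvableFunction f) {D : Set X} (hDc : D.Countable)
    (hD : Dense D) (hnc : NowhereContinuousOn f D) (y : Y) :
    ∃ Q ⊆ D \ f ⁻¹' {y}, Dense Q ∧ NowhereContinuousOn f Q := by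
  have hdiff : D \ f ⁻¹' {y} = D ∩ f ⁻¹' {y}ᶜ := by rw [preimage_compl, sdiff_eq]
  rw [hdiff]
  exact hf.exists_dense_nowhereContinuousOn_subset_inter_preimage hDc hnc
    isOpen_compl_singleton (hdiff ▸ hnc.dense_diff_preimage_singleton hD y)

end

/-- Let `f` be base-resolvable into a regular (T3) space, and `D` a countable dense subset of
`X` such that `f|D` has no point of continuity. Then for every finite `F ⊆ Y` there is a
subset `Q ⊆ D \ f⁻¹(F)` that is dense in `X` such that `f|Q` has no point of continuity. -/
theorem exists_dense_subset_avoiding_finite {X Y : Type*} [TopologicalSpace X]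
    [TopologicalSpace Y] [T3Space Y] (f : X → Y) (hf : BaseResolvableFunction f)
    (D : Set X) (hDc : D.Countable) (hD : Dense D)
    (hnc : ∀ x ∈ D, ¬ ContinuousWithinAt f D x) :
    ∀ F : Set Y, F.Finite → ∃ Q ⊆ D \ f ⁻¹' F, Dense Q ∧
      ∀ x ∈ Q, ¬ ContinuousWithinAt f Q x := by
  intro F hF
  induction F, hF using Set.Finite.induction_on with
  | empty => exact ⟨D, by simp, hD, hnc⟩
  | @insert y F _ _ ih =>
    obtain ⟨Q₁, hQ₁D, hQ₁, hncQ₁⟩ := ih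
    obtain ⟨Q, hQQ₁, hQ, hncQ⟩ :=
      hf.exists_dense_nowhereContinuousOn_subset_diff_preimage_singleton
        (hDc.mono (hQ₁D.trans sdiff_subset)) hQ₁ hncQ₁ y
    refine ⟨Q, fun x hx => ?_, hQ, hncQ⟩
    have hx₁ := hQQ₁ hx
    have hxD := hQ₁D hx₁.1
    exact ⟨hxD.1, fun hxyF => hxyF.elim hx₁.2 hxD.2⟩
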